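/- Let S be a finite totally ordered set, d ≥ 1, N ≥ 2, and let P be a PCA dynamics on S^{Z^d}. Then there exists an increasing synchronous coupling of N copies of P (i.e. of the N-tuple (P, P, ..., P)) if and only if P is attractive. -/

import Mathlib

/-!
If `C` is an increasing synchronous coupling and `ζ` is ordered, the `N` components of a
`C`-step are a.s. ordered, so integrating a monotone `f` against them orders the transition
measures; with `ζ = (η, η', …, η')` this is attractiveness.

Conversely, on a finite alphabet a PCA kernel is the infinite product of its updating rules, so a
synchronous coupling only has to couple the rules site by site. Attractiveness makes the rules
`P.rule k (ζ i)` stochastically increasing in `i`, and plugging a single uniform variable into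
their quantile functions couples them so that the new spins are ordered surely.
-/

open MeasureTheory ProbabilityTheory Filter

abbrev Site (d : ℕ) : Type := Fin d → ℤ
abbrev Config (d : ℕ) (S : Type*) : Type _ := Site d → S

/-- Stochastic ordering of measures: `ν₁ ⪯ ν₂` iff `ν₁(f) ≤ ν₂(f)` for every
bounded measurable increasing `f`. -/
def StochLE {α : Type*} [MeasurableSpace α] [Preorder α] (μ ν : Measure α) : Prop :=
  ∀ f : α → ℝ, Measurable f → Monotone f → (∃ C, ∀ x, |f x| ≤ C) →
    ∫ x, f x ∂μ ≤ ∫ x, f x ∂ν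

/-- A (local) PCA dynamics on `S^{ℤ^d}`: a Markov kernel together with its family of
local updating rules, the kernel being the product over sites of the updating rules. -/
structure PCA (d : ℕ) (S : Type*) [MeasurableSpace S] where
  rule : Site d → Config d S → Measure S
  rule_prob : ∀ k η, IsProbabilityMeasure (rule k η)
  rule_local : ∀ k : Site d, ∃ V : Finset (Site d), ∀ η η' : Config d S,
      (∀ j ∈ V, η j = η' j) → rule k η = rule k η'
  toKernel : Kernel (Config d S) (Config d S)
  markov : IsMarkovKernel toKernel
  product : ∀ (η : Config d S) (Λ : Finset (Site d)) (y : Site d → S),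
      toKernel η {σ : Config d S | ∀ k ∈ Λ, σ k = y k} = ∏ k ∈ Λ, rule k η {y k}


/-- An `N`-tuple of PCA dynamics is increasing if ordered configurations give
stochastically ordered transition measures. -/
def IncreasingTuple {d : ℕ} {S : Type*} [MeasurableSpace S] [Preorder S] {N : ℕ}
    (P : Fin N → PCA d S) : Prop :=
  ∀ ζ : Fin N → Config d S, Monotone ζ →
    ∀ i j : Fin N, i ≤ j → StochLE ((P i).toKernel (ζ i)) ((P j).toKernel (ζ j))

/-- A PCA dynamics is attractive if it maps bounded measurable increasing functions to
increasing functions. -/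
def Attractive {d : ℕ} {S : Type*} [MeasurableSpace S] [Preorder S] (P : PCA d S) : Prop :=
  ∀ f : Config d S → ℝ, Measurable f → Monotone f → (∃ C, ∀ x, |f x| ≤ C) →
    Monotone fun η => ∫ σ, f σ ∂(P.toKernel η)

/-- A synchronous coupling of the PCA dynamics `P 1, …, P N`: a PCA on the spin space
`Fin N → S` whose site marginals are the updating rules of the `P i`. -/
structure SyncCoupling {d : ℕ} {S : Type*} [MeasurableSpace S] {N : ℕ}
    (P : Fin N → PCA d S) where
  Q : PCA d (Fin N → S)
  marginal : ∀ (k : Site d) (ζ : Fin N → Config d S) (i : Fin N),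
    ((Q.rule k fun x j => ζ j x).map fun v => v i) = (P i).rule k (ζ i)

/-- A synchronous coupling is increasing when ordered configurations are a.s. mapped to
ordered configurations. -/
def SyncCoupling.Increasing {d : ℕ} {S : Type*} [MeasurableSpace S] [Preorder S] {N : ℕ}
    {P : Fin N → PCA d S} (C : SyncCoupling P) : Prop :=
  ∀ ζ : Fin N → Config d S, Monotone ζ →
    C.Q.toKernel (fun x j => ζ j x) {ω : Config d (Fin N → S) | ∀ x, Monotone (ω x)} = 1

open Set

section ProductMeasure

variable {ι A : Type*} [MeasurableSpace A]

theorem measurable_infinitePi {α : Type*} [MeasurableSpace α] {μ : α → ι → Measure A}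
    [∀ a i, IsProbabilityMeasure (μ a i)] (hμ : ∀ i, Measurable fun a => μ a i) :
    Measurable fun a => Measure.infinitePi (μ a) := by
  refine .measure_of_isPiSystem_of_isProbabilityMeasure generateFrom_squareCylinders.symm
    (isPiSystem_squareCylinders (fun _ => MeasurableSpace.isPiSystem_measurableSet)
      fun _ => .univ) ?_
  rintro _ ⟨s, t, ht, rfl⟩
  simp_rw [Measure.infinitePi_pi _ fun i _ => ht i (mem_univ i)]
  exact Finset.measurable_prod _ fun i _ =>
    (Measure.measurable_coe (ht i (mem_univ i))).comp (hμ i)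

variable [Countable A] [MeasurableSingletonClass A]

theorem measurable_of_dependsOn {β : Type*} [MeasurableSpace β] {f : (ι → A) → β}
    {V : Finset ι} (hf : DependsOn f V) : Measurable f := by
  intro B _
  have hfactor : f ⁻¹' B = V.restrict ⁻¹' (V.restrict '' (f ⁻¹' B)) := by
    refine (subset_preimage_image _ _).antisymm ?_
    rintro σ ⟨τ, hτ, hστ⟩
    have hτσ : f τ = f σ := hf fun k hk => congrFun hστ ⟨k, hk⟩
    rwa [mem_preimage, ← hτσ]
  rw [hfactor]
  exact (Set.to_countable _).measurableSet.preimage (Finset.measurable_restrict V)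

theorem eq_infinitePi_of_cylinder [Nonempty A] {μ : ι → Measure A}
    [∀ i, IsProbabilityMeasure (μ i)] {ν : Measure (ι → A)}
    (hν : ∀ (s : Finset ι) (y : ι → A), ν {σ | ∀ k ∈ s, σ k = y k} = ∏ k ∈ s, μ k {y k}) :
    ν = Measure.infinitePi μ := by
  classical
  refine Measure.eq_infinitePi _ fun s t ht => ?_
  have hmarginal : ν.map s.restrict = Measure.pi fun k : s => μ k := by
    refine Measure.ext_of_singleton fun y => ?_
    let y' : ι → A := fun k => if hk : k ∈ s then y ⟨k, hk⟩ else Classical.arbitrary A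
    have hcyl : s.restrict ⁻¹' ({y} : Set (s → A)) = {σ | ∀ k ∈ s, σ k = y' k} := by
      ext σ
      simp +contextual [y', funext_iff]
    rw [Measure.map_apply (Finset.measurable_restrict s) (measurableSet_singleton y), hcyl, hν,
      Measure.pi_singleton, ← Finset.prod_coe_sort]
    simp [y']
  have hbox : Set.pi (↑s) t = s.restrict ⁻¹' Set.univ.pi fun k : s => t k := by
    ext σ
    simp
  rw [hbox, ← Measure.map_apply (Finset.measurable_restrict s) (.univ_pi fun k => ht k),
    hmarginal, Measure.pi_pi]
  exact Finset.prod_coe_sort s fun k => μ k (t k)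

end ProductMeasure

section StochasticOrder

variable {α β : Type*} [MeasurableSpace α] [Preorder α] [MeasurableSpace β] [Preorder β]

theorem StochLE.map {μ ν : Measure α} (h : StochLE μ ν) {g : α → β} (hg : Measurable g)
    (hg_mono : Monotone g) : StochLE (μ.map g) (ν.map g) := by
  rintro f hf hf_mono ⟨C, hC⟩
  rw [integral_map hg.aemeasurable hf.aestronglyMeasurable,
    integral_map hg.aemeasurable hf.aestronglyMeasurable]
  exact h (f ∘ g) (hf.comp hg) (hf_mono.comp hg_mono) ⟨C, fun x => hC (g x)⟩

variable {T : Type*} [Finite T] [LinearOrder T] [MeasurableSpace T] [MeasurableSingletonClass T]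

theorem StochLE.measureReal_Iic_le {μ ν : Measure T} [IsProbabilityMeasure μ]
    [IsProbabilityMeasure ν] (h : StochLE μ ν) (s : T) : ν.real (Iic s) ≤ μ.real (Iic s) := by
  have hIoi : MeasurableSet (Ioi s) := (Set.toFinite _).measurableSet
  have hmono : Monotone ((Ioi s).indicator (1 : T → ℝ)) := by
    intro a b hab
    by_cases ha : s < a
    · simp [indicator, ha, ha.trans_le hab]
    · by_cases hb : s < b <;> simp [indicator, ha, hb]
  have hupper := h _ (measurable_one.indicator hIoi) hmono
    ⟨1, fun t => by by_cases ht : s < t <;> simp [indicator, ht]⟩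
  rw [integral_indicator_one hIoi, integral_indicator_one hIoi] at hupper
  rw [← compl_Ioi, probReal_compl_eq_one_sub hIoi, probReal_compl_eq_one_sub hIoi]
  linarith

theorem MeasureTheory.Measure.ext_of_Iic_of_finite {μ ν : Measure T}
    [IsFiniteMeasure μ] (h : ∀ s, μ (Iic s) = ν (Iic s)) : μ = ν := by
  have := Fintype.ofFinite T
  classical
  refine Measure.ext_of_singleton fun s => ?_
  induction s using WellFoundedLT.induction with
  | _ s ih =>
  have hIio : μ (Iio s) = ν (Iio s) := by
    rw [← Set.coe_toFinset (Iio s), ← sum_measure_singleton, ← sum_measure_singleton]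
    exact Finset.sum_congr rfl fun t ht => ih t (by simpa using ht)
  have hsplit (ρ : Measure T) : ρ (Iic s) = ρ (Iio s) + ρ {s} := by
    rw [← Iio_union_right, measure_union (by simp) (measurableSet_singleton s)]
  have hs := h s
  rw [hsplit, hsplit, hIio] at hs
  exact (ENNReal.add_right_inj (hIio ▸ measure_ne_top μ _)).1 hs

end StochasticOrder

instance : IsProbabilityMeasure (volume.restrict (Ioc (0 : ℝ) 1)) := ⟨by simp⟩

section Quantile

variable {T : Type*} [Fintype T] [LinearOrder T] [MeasurableSpace T]

theorem filter_min_le_measureReal_Iic_nonempty (μ : Measure T) [IsProbabilityMeasure μ] (u : ℝ) :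
    (Finset.univ.filter fun s => min u 1 ≤ μ.real (Iic s)).Nonempty := by
  have := nonempty_of_isProbabilityMeasure μ
  obtain ⟨s, hs⟩ := Finite.exists_max (id : T → T)
  refine ⟨s, Finset.mem_filter.2 ⟨Finset.mem_univ s, ?_⟩⟩
  rw [show Iic s = univ from eq_univ_of_forall hs, probReal_univ]
  exact min_le_right u 1

-- On `(0, 1]` this is the generalized inverse of `s ↦ μ (Iic s)`; `min u 1` only keeps the set
-- nonempty for `u > 1`.
noncomputable def quantile (μ : Measure T) [IsProbabilityMeasure μ] (u : ℝ) : T :=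
  (Finset.univ.filter fun s => min u 1 ≤ μ.real (Iic s)).min'
    (filter_min_le_measureReal_Iic_nonempty μ u)

variable {μ ν : Measure T} [IsProbabilityMeasure μ] [IsProbabilityMeasure ν]

theorem quantile_le_iff {u : ℝ} {s : T} : quantile μ u ≤ s ↔ min u 1 ≤ μ.real (Iic s) := by
  constructor
  · intro h
    have hmem := Finset.min'_mem _ (filter_min_le_measureReal_Iic_nonempty μ u)
    exact (Finset.mem_filter.1 hmem).2.trans (measureReal_mono (Iic_subset_Iic.2 h))
  · intro h
    exact Finset.min'_le _ _ (Finset.mem_filter.2 ⟨Finset.mem_univ s, h⟩)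

theorem monotone_quantile : Monotone (quantile μ) := fun _ _ huv =>
  quantile_le_iff.2 ((min_le_min_right 1 huv).trans (quantile_le_iff.1 le_rfl))

theorem measurable_quantile : Measurable (quantile μ) :=
  measurable_to_countable' fun _ =>
    (ordConnected_singleton.preimage_mono (monotone_quantile (μ := μ))).measurableSet

variable [MeasurableSingletonClass T]

theorem StochLE.quantile_le (h : StochLE μ ν) (u : ℝ) : quantile μ u ≤ quantile ν u :=
  quantile_le_iff.2 ((quantile_le_iff.1 le_rfl).trans (h.measureReal_Iic_le _))

theorem map_quantile : (volume.restrict (Ioc (0 : ℝ) 1)).map (quantile μ) = μ := by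
  refine (Measure.ext_of_Iic_of_finite fun s => ?_).symm
  have hIic : MeasurableSet (quantile μ ⁻¹' Iic s) :=
    measurable_quantile ((Set.toFinite _).measurableSet)
  have hlevel : quantile μ ⁻¹' Iic s ∩ Ioc 0 1 = Ioc 0 (μ.real (Iic s)) := by
    ext u
    simp only [mem_inter_iff, mem_preimage, mem_Iic, quantile_le_iff, mem_Ioc]
    constructor
    · rintro ⟨hu, hpos, hle⟩
      exact ⟨hpos, by rwa [min_eq_left hle] at hu⟩
    · rintro ⟨hpos, hu⟩
      have hle : u ≤ 1 := hu.trans measureReal_le_one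
      exact ⟨by rwa [min_eq_left hle], hpos, hle⟩
  rw [Measure.map_apply measurable_quantile ((Set.toFinite _).measurableSet),
    Measure.restrict_apply hIic, hlevel, Real.volume_Ioc, sub_zero, ofReal_measureReal]

end Quantile

section QuantileCoupling

variable {ι T : Type*} [Fintype T] [LinearOrder T] [MeasurableSpace T]
  {μ : ι → Measure T} [∀ i, IsProbabilityMeasure (μ i)]

noncomputable def quantileCoupling (μ : ι → Measure T) [∀ i, IsProbabilityMeasure (μ i)] :
    Measure (ι → T) :=
  (volume.restrict (Ioc (0 : ℝ) 1)).map fun u i => quantile (μ i) u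

theorem measurable_quantile_pi : Measurable fun u i => quantile (μ i) u :=
  measurable_pi_lambda _ fun _ => measurable_quantile

instance : IsProbabilityMeasure (quantileCoupling μ) :=
  Measure.isProbabilityMeasure_map measurable_quantile_pi.aemeasurable

variable [MeasurableSingletonClass T]

theorem quantileCoupling_map_eval (i : ι) : (quantileCoupling μ).map (fun v => v i) = μ i := by
  rw [quantileCoupling, Measure.map_map (measurable_pi_apply i) measurable_quantile_pi]
  exact map_quantile

theorem quantileCoupling_setOf_monotone [Preorder ι]
    (hμ : ∀ i j, i ≤ j → StochLE (μ i) (μ j)) : quantileCoupling μ {v | Monotone v} = 1 := by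
  refine le_antisymm prob_le_one ?_
  have hall : (fun u i => quantile (μ i) u) ⁻¹' {v | Monotone v} = univ :=
    eq_univ_of_forall fun u _ _ hij => (hμ _ _ hij).quantile_le u
  calc (1 : ENNReal) = volume.restrict (Ioc (0 : ℝ) 1) univ := measure_univ.symm
    _ ≤ quantileCoupling μ {v | Monotone v} :=
      hall ▸ Measure.le_map_apply measurable_quantile_pi.aemeasurable _

end QuantileCoupling

namespace PCA

variable {d : ℕ} {A : Type*} [MeasurableSpace A]

instance isProbabilityMeasure_rule (P : PCA d A) (k : Site d) (η : Config d A) :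
    IsProbabilityMeasure (P.rule k η) :=
  P.rule_prob k η

instance isMarkovKernel_toKernel (P : PCA d A) : IsMarkovKernel P.toKernel :=
  P.markov

variable [Countable A] [MeasurableSingletonClass A]

theorem toKernel_eq_infinitePi (P : PCA d A) (η : Config d A) :
    P.toKernel η = Measure.infinitePi fun k => P.rule k η :=
  have : Nonempty A := ⟨η 0⟩
  eq_infinitePi_of_cylinder (P.product η)

theorem map_toKernel_eval (P : PCA d A) (η : Config d A) (k : Site d) :
    (P.toKernel η).map (fun σ => σ k) = P.rule k η := by
  rw [P.toKernel_eq_infinitePi, Measure.infinitePi_map_eval]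

noncomputable def ofRule (rule : Site d → Config d A → Measure A)
    [∀ k η, IsProbabilityMeasure (rule k η)]
    (rule_local : ∀ k : Site d, ∃ V : Finset (Site d), ∀ η η' : Config d A,
      (∀ j ∈ V, η j = η' j) → rule k η = rule k η') : PCA d A where
  rule := rule
  rule_prob := inferInstance
  rule_local := rule_local
  toKernel := ⟨fun η => Measure.infinitePi fun k => rule k η, measurable_infinitePi fun k =>
    have ⟨_, hV⟩ := rule_local k
    measurable_of_dependsOn fun η η' h => hV η η' h⟩
  markov := ⟨fun η =>
    (inferInstance : IsProbabilityMeasure (Measure.infinitePi fun k => rule k η))⟩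
  product η Λ y := by
    have hbox : {σ : Config d A | ∀ k ∈ Λ, σ k = y k} = Set.pi (↑Λ) fun k => {y k} := by
      ext σ
      simp
    rw [Kernel.coe_mk, hbox, Measure.infinitePi_pi _ fun _ _ => measurableSet_singleton _]

end PCA

theorem setOf_forall_monotone_eq_pi {d N : ℕ} {S : Type*} [Preorder S] :
    {ω : Config d (Fin N → S) | ∀ x, Monotone (ω x)} = univ.pi fun _ => {v | Monotone v} := by
  ext ω
  simp

section SyncCoupling

variable {d N : ℕ} {S : Type*} [MeasurableSpace S] [Countable S] [MeasurableSingletonClass S]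

theorem SyncCoupling.map_toKernel {P : Fin N → PCA d S} (C : SyncCoupling P)
    (ζ : Fin N → Config d S) (i : Fin N) :
    (C.Q.toKernel fun x j => ζ j x).map (fun ω x => ω x i) = (P i).toKernel (ζ i) := by
  rw [C.Q.toKernel_eq_infinitePi, (P i).toKernel_eq_infinitePi,
    Measure.infinitePi_map_pi _ fun _ => measurable_pi_apply i]
  simp_rw [C.marginal]

theorem SyncCoupling.Increasing.increasingTuple [Preorder S] {P : Fin N → PCA d S}
    {C : SyncCoupling P} (hC : C.Increasing) : IncreasingTuple P := by
  rintro ζ hζ i j hij f hf hf_mono ⟨c, hc⟩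
  have hmeas : MeasurableSet {ω : Config d (Fin N → S) | ∀ x, Monotone (ω x)} := by
    rw [setOf_forall_monotone_eq_pi]
    exact .univ_pi fun _ => (Set.to_countable _).measurableSet
  have hordered : ∀ᵐ ω ∂(C.Q.toKernel fun x j => ζ j x), ∀ x, Monotone (ω x) :=
    (prob_compl_eq_zero_iff hmeas).2 (hC ζ hζ)
  have hcoord (i : Fin N) : Measurable fun (ω : Config d (Fin N → S)) x => ω x i := by fun_prop
  have hcomponent (i : Fin N) : ∫ σ, f σ ∂(P i).toKernel (ζ i) =
      ∫ ω, f (fun x => ω x i) ∂(C.Q.toKernel fun x j => ζ j x) := by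
    rw [← C.map_toKernel ζ i, integral_map (hcoord i).aemeasurable hf.aestronglyMeasurable]
  have hintegrable (i : Fin N) :
      Integrable (fun ω => f (fun x => ω x i)) (C.Q.toKernel fun x j => ζ j x) :=
    .of_bound (hf.comp (hcoord i)).aestronglyMeasurable c (ae_of_all _ fun _ => hc _)
  rw [hcomponent, hcomponent]
  exact integral_mono_ae (hintegrable i) (hintegrable j)
    (hordered.mono fun ω hω => hf_mono fun x => hω x hij)

theorem IncreasingTuple.stochLE_rule [Preorder S] {P : Fin N → PCA d S} (hP : IncreasingTuple P)
    {ζ : Fin N → Config d S} (hζ : Monotone ζ) (k : Site d) {i j : Fin N} (hij : i ≤ j) :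
    StochLE ((P i).rule k (ζ i)) ((P j).rule k (ζ j)) := by
  rw [← (P i).map_toKernel_eval, ← (P j).map_toKernel_eval]
  exact (hP ζ hζ i j hij).map (measurable_pi_apply k) fun _ _ h => h k

end SyncCoupling

section QuantileSyncCoupling

variable {d N : ℕ} {S : Type*} [Fintype S] [LinearOrder S] [MeasurableSpace S]
  [MeasurableSingletonClass S]

noncomputable def quantileSyncCoupling (P : Fin N → PCA d S) : SyncCoupling P where
  Q := PCA.ofRule (fun k η => quantileCoupling fun i => (P i).rule k fun x => η x i) fun k => by
    choose V hV using fun i => (P i).rule_local k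
    refine ⟨Finset.univ.biUnion V, fun η η' h => ?_⟩
    congr 1
    funext i
    exact hV i _ _ fun j hj => by rw [h j (Finset.mem_biUnion.2 ⟨i, Finset.mem_univ i, hj⟩)]
  marginal _ _ i := quantileCoupling_map_eval i

theorem IncreasingTuple.quantileSyncCoupling_increasing {P : Fin N → PCA d S}
    (hP : IncreasingTuple P) : (quantileSyncCoupling P).Increasing := by
  intro ζ hζ
  rw [setOf_forall_monotone_eq_pi, PCA.toKernel_eq_infinitePi,
    Measure.infinitePi_pi_univ _ fun _ => (Set.to_countable _).measurableSet]
  simp_rw [quantileSyncCoupling, PCA.ofRule,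
    quantileCoupling_setOf_monotone fun i j => hP.stochLE_rule hζ _, tprod_one]

theorem exists_increasing_syncCoupling_iff (P : Fin N → PCA d S) :
    (∃ C : SyncCoupling P, C.Increasing) ↔ IncreasingTuple P :=
  ⟨fun ⟨_, hC⟩ => hC.increasingTuple, fun hP => ⟨_, hP.quantileSyncCoupling_increasing⟩⟩

end QuantileSyncCoupling

theorem increasingTuple_const_iff_attractive {d N : ℕ} {S : Type*} [MeasurableSpace S]
    [Preorder S] (hN : 2 ≤ N) (P : PCA d S) :
    IncreasingTuple (fun _ : Fin N => P) ↔ Attractive P := by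
  constructor
  · intro hP f hf hf_mono hf_bdd η η' hη
    let ζ : Fin N → Config d S := fun i => if (i : ℕ) = 0 then η else η'
    have hζ : Monotone ζ := by
      intro i j hij
      simp only [ζ]
      split_ifs with hi hj hj
      exacts [le_rfl, hη, absurd hij (by omega), le_rfl]
    exact hP ζ hζ ⟨0, by omega⟩ ⟨1, by omega⟩ (Fin.mk_le_mk.2 zero_le_one) f hf hf_mono hf_bdd
  · intro hP ζ hζ i j hij f hf hf_mono hf_bdd
    exact hP f hf hf_mono hf_bdd (hζ hij)

theorem stmt1_general {d N : ℕ} (hN : 2 ≤ N)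
    {S : Type} [Fintype S] [LinearOrder S] [MeasurableSpace S] [MeasurableSingletonClass S]
    (P : PCA d S) :
    (∃ C : SyncCoupling (fun _ : Fin N => P), C.Increasing) ↔ Attractive P :=
  (exists_increasing_syncCoupling_iff _).trans (increasingTuple_const_iff_attractive hN P)

/-- For a finite totally ordered spin space, an increasing synchronous
coupling of `N` copies of a PCA dynamics `P` exists iff `P` is attractive. -/
theorem stmt1 {d N : ℕ} (hd : 1 ≤ d) (hN : 2 ≤ N)
    {S : Type} [Fintype S] [LinearOrder S] [MeasurableSpace S] [MeasurableSingletonClass S]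
    (P : PCA d S) :
    (∃ C : SyncCoupling (fun _ : Fin N => P), C.Increasing) ↔ Attractive P :=
  stmt1_general hN P
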